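/- arXiv:2504.00801 — 2 statements merged into one kernel-verified Lean document; each statement's English description precedes it below -/
import Mathlib

section
/- Let $a<b$, let $h:[a,b]\to\mathbb{R}$ be three times continuously differentiable, attaining its maximum over $[a,b]$ only at the endpoint $c=b$, with $h'(b)=0$ and $h''(b)\neq 0$. Let $k$ be an odd positive integer and let $g:[a,b]\to\mathbb{R}$ be $(k+1)$-times continuously differentiable with $g(b)=g'(b)=\cdots=g^{(k-1)}(b)=0$ and $g^{(k)}(b)\neq 0$. Then, as $t\to\infty$, $\int_a^b e^{t h(x)} g(x)\,dx = e^{t h(b)}\Big( -\, t^{-1/2-k/2}\, g^{(k)}(b)\, \sqrt{\tfrac{2^{k-1}}{|h''(b)|^{k+1}}}\, \tfrac{1}{k!}\big(\tfrac{k-1}{2}\big)! + O(t^{-1-k/2})\Big)$. -/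
/-!
Substituting `u = b - x`, the phase `ψ u = h (b - u) - h b` is negative on `(0, b - a]` and
`ψ u = -ω u² + O(u³)` with `ω = |h''(b)| / 2`, while `g (b - u) = c uᵏ + O(uᵏ⁺¹)` with
`c = (-1)ᵏ g⁽ᵏ⁾(b) / k!`. Away from `u = 0` the integrand is exponentially small. Near `0`,
replacing `ψ` by `-ω u²` and `g (b - u)` by `c uᵏ` costs at most
`∫ (uᵏ⁺¹ + t uᵏ⁺³) e^{-tωu²/2} du = O(t^{-1-k/2})`, since both exponents stay below
`-tωu²/2`.
What remains is the Gamma integral `c ∫₀^∞ uᵏ e^{-tωu²} du`, which for `k = 2m + 1` equals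
`c m! / (2 (tω)^{m+1})`.
-/

open Real MeasureTheory Set Filter Asymptotics
open scoped Nat

theorem exists_abs_sub_taylor_le_right {f : ℝ → ℝ} {a b : ℝ} {n : ℕ} (hab : a ≤ b)
    (hf : ContDiffOn ℝ (n + 1) f (Icc a b)) :
    ∃ C, ∀ x ∈ Icc a b, |f x - ∑ i ∈ Finset.range (n + 1),
      iteratedDerivWithin i f (Icc a b) b * (x - b) ^ i / i !| ≤ C * (b - x) ^ (n + 1) := by
  -- Mathlib's remainder bound is at the left endpoint; apply it to `y ↦ f (-y)`.
  have hrefl : ContDiffOn ℝ (n + 1) (fun y => f (-y)) (Icc (-b) (-a)) :=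
    hf.comp contDiff_neg.contDiffOn fun y hy => by simpa [neg_le, le_neg] using And.symm hy
  obtain ⟨C, hC⟩ := exists_taylor_mean_remainder_bound (neg_le_neg hab) hrefl
  refine ⟨C, fun x hx => ?_⟩
  have := hC (-x) ⟨neg_le_neg hx.2, neg_le_neg hx.1⟩
  simp only [taylor_within_apply, iteratedDerivWithin_comp_neg, neg_Icc, neg_neg, smul_eq_mul,
    Real.norm_eq_abs, sub_neg_eq_add, neg_add_eq_sub] at this
  convert this using 4 with i
  rw [show x - b = -1 * (b - x) by ring, mul_pow]
  field_simp

noncomputable def gaussMoment (n : ℕ) (β : ℝ) : ℝ :=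
  ∫ u in Ioi (0 : ℝ), u ^ n * exp (-β * u ^ 2)

theorem integrableOn_pow_mul_exp_neg_mul_sq (n : ℕ) {β : ℝ} (hβ : 0 < β) :
    IntegrableOn (fun u : ℝ => u ^ n * exp (-β * u ^ 2)) (Ioi 0) := by
  simpa [rpow_natCast] using
    integrableOn_rpow_mul_exp_neg_mul_sq hβ (s := n) (by linarith [n.cast_nonneg (α := ℝ)])

theorem gaussMoment_eq (n : ℕ) {β : ℝ} (hβ : 0 < β) :
    gaussMoment n β = β ^ (-((n : ℝ) + 1) / 2) * (1 / 2) * Gamma (((n : ℝ) + 1) / 2) := by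
  rw [gaussMoment, ← integral_rpow_mul_exp_neg_mul_rpow two_pos
    (by linarith [n.cast_nonneg (α := ℝ)]) hβ]
  simp [rpow_natCast]

theorem gaussMoment_mul (n : ℕ) {t β : ℝ} (ht : 0 < t) (hβ : 0 < β) :
    gaussMoment n (t * β) = t ^ (-((n : ℝ) + 1) / 2) * gaussMoment n β := by
  rw [gaussMoment_eq n (mul_pos ht hβ), gaussMoment_eq n hβ, mul_rpow ht.le hβ.le]
  ring

theorem gaussMoment_odd (m : ℕ) {β : ℝ} (hβ : 0 < β) :
    gaussMoment (2 * m + 1) β = m ! / (2 * β ^ (m + 1)) := by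
  rw [gaussMoment_eq _ hβ, show ((2 * m + 1 : ℕ) + 1 : ℝ) / 2 = m + 1 by push_cast; ring,
    Gamma_nat_eq_factorial, show -((2 * m + 1 : ℕ) + 1 : ℝ) / 2 = -((m + 1 : ℕ) : ℝ) by
    push_cast; ring, rpow_neg hβ.le, rpow_natCast]
  field_simp

theorem abs_exp_sub_exp_le (A B : ℝ) : |exp A - exp B| ≤ |A - B| * exp (max A B) := by
  wlog hBA : B ≤ A generalizing A B
  · rw [abs_sub_comm, abs_sub_comm A B, max_comm]
    exact this B A (le_of_not_ge hBA)
  rw [max_eq_left hBA, abs_of_nonneg (sub_nonneg.2 (exp_le_exp.2 hBA)),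
    abs_of_nonneg (sub_nonneg.2 hBA)]
  have := mul_le_mul_of_nonneg_right (add_one_le_exp (B - A)) (exp_pos A).le
  rw [← exp_add, sub_add_cancel] at this
  linarith

theorem isBigO_rpow_of_abs_le_mul_exp {f : ℝ → ℝ} {K α : ℝ} (hα : 0 < α) (s : ℝ)
    (hf : ∀ᶠ t in atTop, |f t| ≤ K * exp (-α * t)) : f =O[atTop] fun t => t ^ s := by
  refine (IsBigO.of_bound' ?_).trans
    ((isLittleO_exp_neg_mul_rpow_atTop hα s).isBigO.const_mul_left K)
  filter_upwards [hf] with t ht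
  simpa [abs_mul, abs_of_pos (exp_pos _)] using
    ht.trans (mul_le_mul_of_nonneg_right (le_abs_self K) (exp_pos _).le)

theorem exists_pos_bound_of_isBigO_rpow {f : ℝ → ℝ} {s : ℝ}
    (hf : f =O[atTop] fun t => t ^ s) :
    ∃ C > 0, ∃ T > 0, ∀ t > T, |f t| ≤ C * t ^ s := by
  obtain ⟨C, hC, hCf⟩ := hf.exists_pos
  obtain ⟨T, hT⟩ := eventually_atTop.1 (hCf.bound.and (eventually_gt_atTop 0))
  refine ⟨C, hC, max T 1, by positivity, fun t ht => ?_⟩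
  obtain ⟨hbound, ht0⟩ := hT t (le_of_max_le_left ht.le)
  simpa [abs_of_pos (rpow_pos_of_pos ht0 s)] using hbound

theorem laplace_integrand_error_le {ψ F ω c Mψ MF t u : ℝ} (hω : 0 ≤ ω) (hMψ : 0 ≤ Mψ)
    (ht : 0 < t) (hu : 0 ≤ u) (k : ℕ) (hψ : ψ ≤ -(ω / 2) * u ^ 2)
    (hψT : |ψ + ω * u ^ 2| ≤ Mψ * u ^ 3) (hFT : |F - c * u ^ k| ≤ MF * u ^ (k + 1)) :
    |exp (t * ψ) * F - c * (u ^ k * exp (-(t * ω) * u ^ 2))| ≤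
      MF * (u ^ (k + 1) * exp (-(t * (ω / 2)) * u ^ 2)) +
        |c| * Mψ * t * (u ^ (k + 3) * exp (-(t * (ω / 2)) * u ^ 2)) := by
  have htψ : t * ψ ≤ -(t * (ω / 2)) * u ^ 2 := by
    nlinarith [mul_le_mul_of_nonneg_left hψ ht.le]
  have hexp : |exp (t * ψ) - exp (-(t * ω) * u ^ 2)| ≤
      t * (Mψ * u ^ 3) * exp (-(t * (ω / 2)) * u ^ 2) := by
    refine (abs_exp_sub_exp_le _ _).trans (mul_le_mul ?_ ?_ (exp_pos _).le
      (mul_nonneg ht.le (mul_nonneg hMψ (pow_nonneg hu 3))))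
    · rw [show t * ψ - -(t * ω) * u ^ 2 = t * (ψ + ω * u ^ 2) by ring, abs_mul, abs_of_pos ht]
      exact mul_le_mul_of_nonneg_left hψT ht.le
    · exact exp_le_exp.2 (max_le htψ
        (by nlinarith [mul_nonneg (mul_nonneg ht.le hω) (sq_nonneg u)]))
  calc |exp (t * ψ) * F - c * (u ^ k * exp (-(t * ω) * u ^ 2))|
      = |exp (t * ψ) * (F - c * u ^ k) +
          c * u ^ k * (exp (t * ψ) - exp (-(t * ω) * u ^ 2))| := by ring_nf
    _ ≤ exp (-(t * (ω / 2)) * u ^ 2) * (MF * u ^ (k + 1)) +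
          |c| * u ^ k * (t * (Mψ * u ^ 3) * exp (-(t * (ω / 2)) * u ^ 2)) := by
      refine (abs_add_le _ _).trans (add_le_add ?_ ?_) <;> rw [abs_mul]
      · rw [abs_of_pos (exp_pos _)]
        exact mul_le_mul (exp_le_exp.2 htψ) hFT (abs_nonneg _) (exp_pos _).le
      · rw [abs_mul, abs_of_nonneg (pow_nonneg hu k)]
        exact mul_le_mul_of_nonneg_left hexp (mul_nonneg (abs_nonneg c) (pow_nonneg hu k))
    _ = _ := by ring

theorem abs_integral_exp_mul_sub_le {ψ F : ℝ → ℝ} {k : ℕ} {ω c Mψ MF δ t : ℝ}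
    (hω : 0 < ω) (hδ : 0 ≤ δ) (hMψ : 0 ≤ Mψ) (hMF : 0 ≤ MF) (ht : 0 < t)
    (hψ : ∀ u ∈ Icc 0 δ, ψ u ≤ -(ω / 2) * u ^ 2)
    (hψT : ∀ u ∈ Icc 0 δ, |ψ u + ω * u ^ 2| ≤ Mψ * u ^ 3)
    (hFT : ∀ u ∈ Icc 0 δ, |F u - c * u ^ k| ≤ MF * u ^ (k + 1)) :
    |∫ u in 0..δ, (exp (t * ψ u) * F u - c * (u ^ k * exp (-(t * ω) * u ^ 2)))| ≤
      (MF * gaussMoment (k + 1) (ω / 2) + |c| * Mψ * gaussMoment (k + 3) (ω / 2)) *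
        t ^ (-1 - (k : ℝ) / 2) := by
  have hβ : 0 < t * (ω / 2) := by positivity
  set ρ : ℝ → ℝ := fun u => MF * (u ^ (k + 1) * exp (-(t * (ω / 2)) * u ^ 2)) +
    |c| * Mψ * t * (u ^ (k + 3) * exp (-(t * (ω / 2)) * u ^ 2))
  have hρ_int : IntegrableOn ρ (Ioi 0) :=
    ((integrableOn_pow_mul_exp_neg_mul_sq _ hβ).const_mul _).add
      ((integrableOn_pow_mul_exp_neg_mul_sq _ hβ).const_mul _)
  have hρ_nonneg : ∀ u ∈ Ioi (0 : ℝ), 0 ≤ ρ u := fun u (hu : 0 < u) => by positivity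
  have hpointwise : ∀ u ∈ Icc 0 δ,
      |exp (t * ψ u) * F u - c * (u ^ k * exp (-(t * ω) * u ^ 2))| ≤ ρ u := fun u hu =>
    laplace_integrand_error_le hω.le hMψ ht hu.1 k (hψ u hu) (hψT u hu) (hFT u hu)
  have hρ_integral : ∫ u in Ioi 0, ρ u =
      (MF * gaussMoment (k + 1) (ω / 2) + |c| * Mψ * gaussMoment (k + 3) (ω / 2)) *
        t ^ (-1 - (k : ℝ) / 2) := by
    rw [integral_add ((integrableOn_pow_mul_exp_neg_mul_sq _ hβ).const_mul _)
        ((integrableOn_pow_mul_exp_neg_mul_sq _ hβ).const_mul _), integral_const_mul,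
      integral_const_mul, ← gaussMoment, ← gaussMoment, gaussMoment_mul _ ht (half_pos hω),
      gaussMoment_mul _ ht (half_pos hω)]
    have hrpow₁ : t ^ (-(((k + 1 : ℕ) : ℝ) + 1) / 2) = t ^ (-1 - (k : ℝ) / 2) := by
      congr 1; push_cast; ring
    have hrpow₃ : t * t ^ (-(((k + 3 : ℕ) : ℝ) + 1) / 2) = t ^ (-1 - (k : ℝ) / 2) := by
      rw [← rpow_one_add' ht.le (by push_cast; linarith [k.cast_nonneg (α := ℝ)])]
      congr 1; push_cast; ring
    rw [hrpow₁, ← hrpow₃]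
    ring
  calc |∫ u in 0..δ, (exp (t * ψ u) * F u - c * (u ^ k * exp (-(t * ω) * u ^ 2)))|
      ≤ ∫ u in 0..δ, ρ u := by
        rw [← Real.norm_eq_abs]
        exact intervalIntegral.norm_integral_le_of_norm_le hδ
          (Eventually.of_forall fun u hu => hpointwise u ⟨hu.1.le, hu.2⟩)
          ((intervalIntegrable_iff_integrableOn_Ioc_of_le hδ).2
            (hρ_int.mono_set Ioc_subset_Ioi_self))
    _ ≤ ∫ u in Ioi 0, ρ u := by
        rw [intervalIntegral.integral_of_le hδ]
        exact setIntegral_mono_set hρ_int ((ae_restrict_mem measurableSet_Ioi).mono hρ_nonneg)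
          Ioc_subset_Ioi_self.eventuallyLE
    _ = _ := hρ_integral

theorem isBigO_integral_exp_mul_of_neg {ψ F : ℝ → ℝ} {δ L : ℝ} (hδL : δ ≤ L)
    (hψc : ContinuousOn ψ (Icc δ L)) (hFc : ContinuousOn F (Icc δ L))
    (hneg : ∀ u ∈ Icc δ L, ψ u < 0) (s : ℝ) :
    (fun t => ∫ u in δ..L, exp (t * ψ u) * F u) =O[atTop] fun t => t ^ s := by
  obtain ⟨u₀, hu₀, hmax⟩ := isCompact_Icc.exists_isMaxOn (nonempty_Icc.2 hδL) hψc
  obtain ⟨K, hK⟩ := isCompact_Icc.exists_bound_of_continuousOn hFc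
  refine isBigO_rpow_of_abs_le_mul_exp (K := K * |L - δ|) (neg_pos.2 (hneg u₀ hu₀)) s ?_
  filter_upwards [eventually_ge_atTop 0] with t ht
  have hbound : ∀ u ∈ uIoc δ L, ‖exp (t * ψ u) * F u‖ ≤ exp (t * ψ u₀) * K := by
    intro u hu
    rw [uIoc_of_le hδL] at hu
    have hu' : u ∈ Icc δ L := Ioc_subset_Icc_self hu
    rw [norm_mul, norm_of_nonneg (exp_pos _).le]
    exact mul_le_mul (exp_le_exp.2 (mul_le_mul_of_nonneg_left (hmax hu') ht)) (hK u hu')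
      (norm_nonneg _) (exp_pos _).le
  calc |∫ u in δ..L, exp (t * ψ u) * F u| ≤ exp (t * ψ u₀) * K * |L - δ| :=
        intervalIntegral.norm_integral_le_of_norm_le_const hbound
    _ = K * |L - δ| * exp (-(-ψ u₀) * t) := by ring_nf

theorem isBigO_integral_Ioi_pow_mul_exp {δ ω : ℝ} (hδ : 0 < δ) (hω : 0 < ω) (k : ℕ)
    (s : ℝ) :
    (fun t => ∫ u in Ioi δ, u ^ k * exp (-(t * ω) * u ^ 2)) =O[atTop] fun t => t ^ s := by
  refine isBigO_rpow_of_abs_le_mul_exp (K := exp (ω * δ ^ 2) * gaussMoment k ω)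
    (mul_pos hω (pow_pos hδ 2)) s ?_
  filter_upwards [eventually_ge_atTop 1] with t ht
  have hint : IntegrableOn (fun u : ℝ => u ^ k * exp (-ω * u ^ 2)) (Ioi δ) :=
    (integrableOn_pow_mul_exp_neg_mul_sq k hω).mono_set (Ioi_subset_Ioi hδ.le)
  have hbound : ∀ u ∈ Ioi δ, ‖u ^ k * exp (-(t * ω) * u ^ 2)‖ ≤
      exp (-(t - 1) * (ω * δ ^ 2)) * (u ^ k * exp (-ω * u ^ 2)) := by
    intro u (hu : δ < u)
    have hu0 : 0 < u := hδ.trans hu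
    rw [norm_of_nonneg (by positivity), mul_left_comm, ← exp_add]
    gcongr
    nlinarith [mul_le_mul_of_nonneg_left (pow_le_pow_left₀ hδ.le hu.le 2)
      (mul_nonneg (sub_nonneg.2 ht) hω.le)]
  calc |∫ u in Ioi δ, u ^ k * exp (-(t * ω) * u ^ 2)|
      ≤ ∫ u in Ioi δ, exp (-(t - 1) * (ω * δ ^ 2)) * (u ^ k * exp (-ω * u ^ 2)) :=
        norm_integral_le_of_norm_le (hint.const_mul _)
          ((ae_restrict_mem measurableSet_Ioi).mono hbound)
    _ ≤ exp (-(t - 1) * (ω * δ ^ 2)) * gaussMoment k ω := by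
        rw [integral_const_mul, gaussMoment]
        exact mul_le_mul_of_nonneg_left (setIntegral_mono_set
          (integrableOn_pow_mul_exp_neg_mul_sq k hω)
          ((ae_restrict_mem measurableSet_Ioi).mono fun u (hu : 0 < u) => by positivity)
          (Ioi_subset_Ioi hδ.le).eventuallyLE) (exp_pos _).le
    _ = exp (ω * δ ^ 2) * gaussMoment k ω * exp (-(ω * δ ^ 2) * t) := by
        rw [mul_right_comm, ← exp_add]; ring_nf

theorem exists_abs_add_mul_sq_le_half {ψ : ℝ → ℝ} {L ω M : ℝ} (hL : 0 < L)
    (hω : ω ≠ 0) (hT : ∀ u ∈ Icc 0 L, |ψ u + ω * u ^ 2| ≤ M * u ^ 3) :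
    ∃ δ > 0, δ ≤ L ∧ ∀ u ∈ Icc 0 δ, |ψ u + ω * u ^ 2| ≤ |ω| / 2 * u ^ 2 := by
  set δ := min L (|ω| / (2 * (|M| + 1)))
  have hω' : 0 < |ω| := abs_pos.2 hω
  have hδM : |M| * δ ≤ |ω| / 2 :=
    calc |M| * δ ≤ (|M| + 1) * (|ω| / (2 * (|M| + 1))) :=
          mul_le_mul (by linarith) (min_le_right _ _) (by positivity) (by positivity)
      _ = |ω| / 2 := by field_simp
  refine ⟨δ, lt_min hL (by positivity), min_le_left _ _, fun u hu => ?_⟩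
  refine (hT u ⟨hu.1, hu.2.trans (min_le_left _ _)⟩).trans ?_
  calc M * u ^ 3 ≤ |M| * δ * u ^ 2 := by
        have := mul_le_mul (le_abs_self M) hu.2 hu.1 (abs_nonneg M)
        nlinarith [mul_le_mul_of_nonneg_right this (sq_nonneg u)]
    _ ≤ |ω| / 2 * u ^ 2 := mul_le_mul_of_nonneg_right hδM (sq_nonneg u)

theorem nonneg_of_neg_of_abs_add_mul_sq_le {ψ : ℝ → ℝ} {L ω M : ℝ} (hL : 0 < L)
    (hneg : ∀ u ∈ Ioc 0 L, ψ u < 0)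
    (hT : ∀ u ∈ Icc 0 L, |ψ u + ω * u ^ 2| ≤ M * u ^ 3) :
    0 ≤ ω := by
  by_contra! hω
  obtain ⟨δ, hδ, hδL, hbound⟩ := exists_abs_add_mul_sq_le_half hL hω.ne hT
  have hlower := (abs_le.1 (hbound δ ⟨hδ.le, le_rfl⟩)).1
  rw [abs_of_neg hω] at hlower
  nlinarith [hneg δ ⟨hδ, hδL⟩, pow_pos hδ 2]

theorem laplace_endpoint_quadratic_isBigO {ψ F : ℝ → ℝ} {k : ℕ} {L ω c Mψ MF : ℝ}
    (hL : 0 < L) (hω : 0 < ω) (hψc : ContinuousOn ψ (Icc 0 L)) (hFc : ContinuousOn F (Icc 0 L))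
    (hneg : ∀ u ∈ Ioc 0 L, ψ u < 0)
    (hψT : ∀ u ∈ Icc 0 L, |ψ u + ω * u ^ 2| ≤ Mψ * u ^ 3)
    (hFT : ∀ u ∈ Icc 0 L, |F u - c * u ^ k| ≤ MF * u ^ (k + 1)) :
    (fun t => (∫ u in 0..L, exp (t * ψ u) * F u) - c * gaussMoment k (t * ω)) =O[atTop]
      fun t => t ^ (-1 - (k : ℝ) / 2) := by
  have hL' : L ∈ Icc 0 L := ⟨hL.le, le_rfl⟩
  have hMψ : 0 ≤ Mψ :=
    nonneg_of_mul_nonneg_left ((abs_nonneg _).trans (hψT L hL')) (pow_pos hL 3)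
  have hMF : 0 ≤ MF :=
    nonneg_of_mul_nonneg_left ((abs_nonneg _).trans (hFT L hL')) (pow_pos hL _)
  obtain ⟨δ, hδ, hδL, hδbound⟩ := exists_abs_add_mul_sq_le_half hL hω.ne' hψT
  have hsub : Icc 0 δ ⊆ Icc 0 L := Icc_subset_Icc_right hδL
  have hquad : ∀ u ∈ Icc 0 δ, ψ u ≤ -(ω / 2) * u ^ 2 := fun u hu => by
    linarith [abs_of_pos hω ▸ (abs_le.1 (hδbound u hu)).2]
  have hlocal : (fun t => ∫ u in 0..δ,
      (exp (t * ψ u) * F u - c * (u ^ k * exp (-(t * ω) * u ^ 2)))) =O[atTop]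
      fun t => t ^ (-1 - (k : ℝ) / 2) := by
    refine IsBigO.of_bound
      (MF * gaussMoment (k + 1) (ω / 2) + |c| * Mψ * gaussMoment (k + 3) (ω / 2)) ?_
    filter_upwards [eventually_gt_atTop 0] with t ht
    rw [norm_of_nonneg (rpow_pos_of_pos ht _).le]
    exact abs_integral_exp_mul_sub_le hω hδ.le hMψ hMF ht hquad (fun u hu => hψT u (hsub hu))
      (fun u hu => hFT u (hsub hu))
  have hbulk := isBigO_integral_exp_mul_of_neg hδL (hψc.mono (Icc_subset_Icc_left hδ.le))
    (hFc.mono (Icc_subset_Icc_left hδ.le)) (fun u hu => hneg u ⟨hδ.trans_le hu.1, hu.2⟩)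
    (-1 - (k : ℝ) / 2)
  have htail := (isBigO_integral_Ioi_pow_mul_exp hδ hω k (-1 - (k : ℝ) / 2)).const_mul_left c
  refine ((hlocal.add hbulk).sub htail).congr' ?_ EventuallyEq.rfl
  filter_upwards [eventually_gt_atTop 0] with t ht
  have hφ : ContinuousOn (fun u => exp (t * ψ u) * F u) (Icc 0 L) :=
    (continuous_exp.comp_continuousOn (hψc.const_smul t)).mul hFc
  have hmodel : Continuous fun u : ℝ => u ^ k * exp (-(t * ω) * u ^ 2) := by fun_prop
  rw [intervalIntegral.integral_sub ((hφ.mono hsub).intervalIntegrable_of_Icc hδ.le)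
      ((hmodel.intervalIntegrable 0 δ).const_mul c), intervalIntegral.integral_const_mul,
    ← intervalIntegral.integral_Ioi_sub_Ioi (integrableOn_pow_mul_exp_neg_mul_sq k
      (mul_pos ht hω)) hδ.le, ← gaussMoment,
    ← intervalIntegral.integral_add_adjacent_intervals
      ((hφ.mono hsub).intervalIntegrable_of_Icc hδ.le)
      ((hφ.mono (Icc_subset_Icc_left hδ.le)).intervalIntegrable_of_Icc hδL)]
  ring

theorem exp_neg_mul_integral_exp_mul_eq {a b : ℝ} {h g : ℝ → ℝ} (t : ℝ) :
    exp (-(t * h b)) * ∫ x in a..b, exp (t * h x) * g x =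
      ∫ u in 0..b - a, exp (t * (h (b - u) - h b)) * g (b - u) := by
  rw [intervalIntegral.integral_comp_sub_left (fun x => exp (t * (h x - h b)) * g x) b,
    sub_sub_cancel, sub_zero, ← intervalIntegral.integral_const_mul]
  congr 1 with x
  rw [← mul_assoc, ← exp_add]
  ring_nf

theorem laplace_right_endpoint_isBigO {a b : ℝ} (hab : a < b) {h g : ℝ → ℝ} {k : ℕ}
    (hh : ContDiffOn ℝ 3 h (Icc a b)) (hmax : ∀ x ∈ Icc a b, x ≠ b → h x < h b)
    (hh1 : derivWithin h (Icc a b) b = 0) (hh2 : iteratedDerivWithin 2 h (Icc a b) b ≠ 0)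
    (hg : ContDiffOn ℝ (k + 1) g (Icc a b))
    (hgvanish : ∀ i < k, iteratedDerivWithin i g (Icc a b) b = 0) :
    (fun t => exp (-(t * h b)) * (∫ x in a..b, exp (t * h x) * g x) -
      (-1) ^ k * iteratedDerivWithin k g (Icc a b) b / k ! *
        gaussMoment k (t * (|iteratedDerivWithin 2 h (Icc a b) b| / 2))) =O[atTop]
      fun t => t ^ (-1 - (k : ℝ) / 2) := by
  set H2 := iteratedDerivWithin 2 h (Icc a b) b
  set G := iteratedDerivWithin k g (Icc a b) b
  have hmem : ∀ u ∈ Icc 0 (b - a), b - u ∈ Icc a b := fun u hu =>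
    ⟨by linarith [hu.2], by linarith [hu.1]⟩
  obtain ⟨Mh, hMh⟩ := exists_abs_sub_taylor_le_right hab.le (n := 2) (hh.of_le (by norm_num))
  obtain ⟨Mg, hMg⟩ := exists_abs_sub_taylor_le_right hab.le hg
  have hψT : ∀ u ∈ Icc 0 (b - a), |(h (b - u) - h b) + -H2 / 2 * u ^ 2| ≤ Mh * u ^ 3 := by
    intro u hu
    have := hMh (b - u) (hmem u hu)
    simp only [Finset.sum_range_succ, Finset.sum_range_zero, iteratedDerivWithin_zero,
      iteratedDerivWithin_one, hh1] at this
    convert this using 2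
    · simp only [H2, pow_zero, mul_one, Nat.factorial, Nat.cast_one, div_one, zero_mul, add_zero]
      ring
    · ring
  have hFT : ∀ u ∈ Icc 0 (b - a),
      |g (b - u) - (-1) ^ k * G / k ! * u ^ k| ≤ Mg * u ^ (k + 1) := by
    intro u hu
    have := hMg (b - u) (hmem u hu)
    rw [Finset.sum_range_succ, Finset.sum_eq_zero fun i hi => by
      rw [hgvanish i (Finset.mem_range.1 hi), zero_mul, zero_div], zero_add] at this
    convert this using 2 <;> ring
  have hneg : ∀ u ∈ Ioc 0 (b - a), h (b - u) - h b < 0 := fun u hu =>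
    sub_neg.2 (hmax _ (hmem u (Ioc_subset_Icc_self hu)) (by linarith [hu.1]))
  have hH2 : H2 < 0 := by
    have := nonneg_of_neg_of_abs_add_mul_sq_le (sub_pos.2 hab) hneg hψT
    exact lt_of_le_of_ne (by linarith) hh2
  have key := laplace_endpoint_quadratic_isBigO (ψ := fun u => h (b - u) - h b)
    (F := fun u => g (b - u)) (sub_pos.2 hab) (by linarith)
    ((hh.continuousOn.comp (by fun_prop) hmem).sub continuousOn_const)
    (hg.continuousOn.comp (by fun_prop) hmem) hneg hψT hFT
  rw [abs_of_neg hH2]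
  exact key.congr_left fun t => by rw [exp_neg_mul_integral_exp_mul_eq]

theorem laplace_odd_leading_term_eq {k : ℕ} (hk : Odd k) {t A G : ℝ} (ht : 0 < t)
    (hA : A ≠ 0) :
    -(t ^ (-(1 : ℝ) / 2 - (k : ℝ) / 2)) * G * sqrt ((2 : ℝ) ^ (k - 1) / |A| ^ (k + 1)) *
        ((((k - 1) / 2)! : ℝ) / (k ! : ℝ)) =
      (-1) ^ k * G / k ! * gaussMoment k (t * (|A| / 2)) := by
  obtain ⟨m, rfl⟩ := hk
  have hA' : 0 < |A| := abs_pos.2 hA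
  have hsqrt :
      sqrt ((2 : ℝ) ^ (2 * m + 1 - 1) / |A| ^ (2 * m + 1 + 1)) = 2 ^ m / |A| ^ (m + 1) := by
    rw [show 2 * m + 1 - 1 = 2 * m by omega, show 2 * m + 1 + 1 = 2 * (m + 1) by ring, pow_mul',
      pow_mul', ← div_pow, sqrt_sq (by positivity)]
  have ht' : t ^ (-(1 : ℝ) / 2 - ((2 * m + 1 : ℕ) : ℝ) / 2) = (t ^ (m + 1))⁻¹ := by
    rw [show -(1 : ℝ) / 2 - ((2 * m + 1 : ℕ) : ℝ) / 2 = -((m + 1 : ℕ) : ℝ) by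
      push_cast; ring, rpow_neg ht.le, rpow_natCast]
  rw [gaussMoment_odd m (by positivity), hsqrt, ht', show (2 * m + 1 - 1) / 2 = m by omega,
    Odd.neg_one_pow ⟨m, rfl⟩, mul_div_assoc, mul_pow, div_pow]
  field_simp
  ring

theorem laplace_right_endpoint_critical_odd_general
    (a b : ℝ) (hab : a < b)
    (h g : ℝ → ℝ) (k : ℕ) (hk : Odd k)
    (hh : ContDiffOn ℝ 3 h (Set.Icc a b))
    (hmax : ∀ x ∈ Set.Icc a b, x ≠ b → h x < h b)
    (hh1 : derivWithin h (Set.Icc a b) b = 0)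
    (hh2 : iteratedDerivWithin 2 h (Set.Icc a b) b ≠ 0)
    (hg : ContDiffOn ℝ (k + 1) g (Set.Icc a b))
    (hgvanish : ∀ i < k, iteratedDerivWithin i g (Set.Icc a b) b = 0) :
    ∃ C > 0, ∃ T > 0, ∀ t > T,
      |(∫ x in a..b, Real.exp (t * h x) * g x) -
        Real.exp (t * h b) * (-(t ^ (-(1 : ℝ) / 2 - (k : ℝ) / 2)) *
          iteratedDerivWithin k g (Set.Icc a b) b *
          Real.sqrt ((2 : ℝ) ^ (k - 1) / |iteratedDerivWithin 2 h (Set.Icc a b) b| ^ (k + 1)) *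
          ((Nat.factorial ((k - 1) / 2) : ℝ) / (Nat.factorial k : ℝ)))| ≤
        C * Real.exp (t * h b) * t ^ (-(1 : ℝ) - (k : ℝ) / 2) := by
  obtain ⟨C, hC, T, hT, hbound⟩ := exists_pos_bound_of_isBigO_rpow
    (laplace_right_endpoint_isBigO hab hh hmax hh1 hh2 hg hgvanish)
  refine ⟨C, hC, T, hT, fun t ht => ?_⟩
  rw [laplace_odd_leading_term_eq hk (hT.trans ht) hh2]
  have hE : 0 < exp (t * h b) := exp_pos _
  have hEinv : exp (t * h b) * exp (-(t * h b)) = 1 := by rw [← exp_add, add_neg_cancel, exp_zero]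
  calc _ = |exp (t * h b) * (exp (-(t * h b)) * (∫ x in a..b, exp (t * h x) * g x) -
        (-1) ^ k * iteratedDerivWithin k g (Icc a b) b / k ! *
          gaussMoment k (t * (|iteratedDerivWithin 2 h (Icc a b) b| / 2)))| := by
        simp only [mul_sub, ← mul_assoc, hEinv, one_mul]
    _ ≤ exp (t * h b) * (C * t ^ (-1 - (k : ℝ) / 2)) := by
        rw [abs_mul, abs_of_pos hE]
        exact mul_le_mul_of_nonneg_left (hbound t ht) hE.le
    _ = _ := by ring

/-- Laplace's method, maximum at the right endpoint `b` with `h'(b) = 0`, `k` odd: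
`∫ e^{th} g = e^{th(b)} (-t^{-1/2-k/2} g^(k)(b) √(2^(k-1)/|h''(b)|^(k+1)) ((k-1)/2)!/k! + O(t^{-1-k/2}))`. -/
theorem laplace_right_endpoint_critical_odd
    (a b : ℝ) (hab : a < b)
    (h g : ℝ → ℝ) (k : ℕ) (hk : Odd k) (hkpos : 0 < k)
    (hh : ContDiffOn ℝ 3 h (Set.Icc a b))
    (hmax : ∀ x ∈ Set.Icc a b, x ≠ b → h x < h b)
    (hh1 : derivWithin h (Set.Icc a b) b = 0)
    (hh2 : iteratedDerivWithin 2 h (Set.Icc a b) b ≠ 0)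
    (hg : ContDiffOn ℝ (k + 1) g (Set.Icc a b))
    (hgvanish : ∀ i < k, iteratedDerivWithin i g (Set.Icc a b) b = 0)
    (hgk : iteratedDerivWithin k g (Set.Icc a b) b ≠ 0) :
    ∃ C > 0, ∃ T > 0, ∀ t > T,
      |(∫ x in a..b, Real.exp (t * h x) * g x) -
        Real.exp (t * h b) * (-(t ^ (-(1 : ℝ) / 2 - (k : ℝ) / 2)) *
          iteratedDerivWithin k g (Set.Icc a b) b *
          Real.sqrt ((2 : ℝ) ^ (k - 1) / |iteratedDerivWithin 2 h (Set.Icc a b) b| ^ (k + 1)) *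
          ((Nat.factorial ((k - 1) / 2) : ℝ) / (Nat.factorial k : ℝ)))| ≤
        C * Real.exp (t * h b) * t ^ (-(1 : ℝ) - (k : ℝ) / 2) :=
  laplace_right_endpoint_critical_odd_general a b hab h g k hk hh hmax hh1 hh2 hg hgvanish
end

section
/- Let $a<b$, let $h:[a,b]\to\mathbb{R}$ be three times continuously differentiable, attaining its maximum over $[a,b]$ only at an endpoint $c\in\{a,b\}$, with $h'(c)=0$ and $h''(c)\neq 0$, and let $g:[a,b]\to\mathbb{R}$ be continuously differentiable with $g(c)\neq 0$. Then $\int_a^b e^{t h(x)} g(x)\,dx \sim \sqrt{\tfrac{\pi}{2\,|h''(c)|}}\, g(c)\, \tfrac{e^{t h(c)}}{\sqrt{t}}$ as $t\to\infty$. -/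
/-!
Substituting `x = a + s / √t` turns `√t ∫_a^b e^{t (h x - h a)} g x dx` into an integral over
`s ∈ (0, √t (b - a)]` whose integrand tends to `e^{h''(a) s² / 2} g a`, because
`t (h (a + s / √t) - h a) = s² · (h x - h a) / (x - a)²` and Taylor's theorem gives
`(h x - h a) / (x - a)² → h''(a) / 2`. A strict, nondegenerate maximum at `a` upgrades the local
quadratic decay to `h x - h a ≤ -κ (x - a)²` on all of `[a, b]`, so `M e^{-κ s²}` dominates and
dominated convergence leaves the half-line Gaussian integral. The right endpoint reduces to the
left one under `x ↦ -x`.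
-/

open Real MeasureTheory Set Filter Topology

theorem taylorWithinEval_two (f : ℝ → ℝ) (s : Set ℝ) (x₀ x : ℝ) :
    taylorWithinEval f 2 s x₀ x =
      f x₀ + derivWithin f s x₀ * (x - x₀) + iteratedDerivWithin 2 f s x₀ / 2 * (x - x₀) ^ 2 := by
  simp [taylor_within_apply, iteratedDerivWithin_one]
  ring

theorem tendsto_sub_div_sq_of_derivWithin_eq_zero {f : ℝ → ℝ} {s : Set ℝ} {x₀ : ℝ}
    (hs : Convex ℝ s) (hx₀ : x₀ ∈ s) (hf : ContDiffOn ℝ 2 f s)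
    (hf' : derivWithin f s x₀ = 0) :
    Tendsto (fun x => (f x - f x₀) / (x - x₀) ^ 2) (𝓝[s \ {x₀}] x₀)
      (𝓝 (iteratedDerivWithin 2 f s x₀ / 2)) := by
  have taylor : Tendsto (fun x => (f x - taylorWithinEval f 2 s x₀ x) / (x - x₀) ^ 2
      + iteratedDerivWithin 2 f s x₀ / 2) (𝓝[s \ {x₀}] x₀)
      (𝓝 (0 + iteratedDerivWithin 2 f s x₀ / 2)) :=
    ((Real.taylor_tendsto hs hx₀ hf).mono_left (nhdsWithin_mono _ sdiff_subset)).add_const _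
  rw [zero_add] at taylor
  refine taylor.congr' (eventually_nhdsWithin_of_forall fun x hx => ?_)
  have hx : x - x₀ ≠ 0 := sub_ne_zero.2 hx.2
  rw [taylorWithinEval_two, hf']
  field_simp
  ring

theorem exists_pos_forall_sub_le_neg_mul_sq {h : ℝ → ℝ} {a b c : ℝ} (hab : a < b) (hc : 0 < c)
    (hh : ContinuousOn h (Icc a b)) (hmax : ∀ x ∈ Icc a b, x ≠ a → h x < h a)
    (hloc : ∀ᶠ x in 𝓝[>] a, h x - h a ≤ -c * (x - a) ^ 2) :
    ∃ c' > 0, ∀ x ∈ Icc a b, h x - h a ≤ -c' * (x - a) ^ 2 := by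
  obtain ⟨u, hau, hu⟩ := mem_nhdsGT_iff_exists_Ioc_subset.1 hloc
  have hae : a < min u b := lt_min hau hab
  obtain ⟨m, ⟨hem, hmb⟩, hm⟩ := isCompact_Icc.exists_isMaxOn (nonempty_Icc.2 (min_le_right u b))
    (hh.mono (Icc_subset_Icc hae.le le_rfl))
  have hgap : 0 < h a - h m := sub_pos.2 (hmax m ⟨by linarith, hmb⟩ (by linarith))
  refine ⟨min c ((h a - h m) / (b - a) ^ 2), lt_min hc (by positivity), fun x ⟨hax, hxb⟩ => ?_⟩
  rcases hax.eq_or_lt with rfl | hax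
  · simp
  rcases le_total x (min u b) with hxe | hex
  · calc h x - h a ≤ -c * (x - a) ^ 2 := hu ⟨hax, hxe.trans (min_le_left u b)⟩
      _ ≤ _ := by gcongr; exact min_le_left _ _
  · have hgap_le : (h a - h m) / (b - a) ^ 2 * (x - a) ^ 2 ≤ h a - h m := by
      rw [div_mul_eq_mul_div, div_le_iff₀ (by nlinarith)]
      gcongr
    calc h x - h a ≤ -((h a - h m) / (b - a) ^ 2) * (x - a) ^ 2 := by
          linarith [isMaxOn_iff.1 hm x ⟨hex, hxb⟩]
      _ ≤ _ := by gcongr; exact min_le_right _ _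

/-- The integrand of `√t ∫_a^b e^{t (h x - h a)} g x dx` after the substitution `x = a + s / √t`. -/
noncomputable def laplaceRescaled (h g : ℝ → ℝ) (a b t : ℝ) : ℝ → ℝ :=
  (Iic (√t * (b - a))).indicator fun s => exp (t * (h (a + s / √t) - h a)) * g (a + s / √t)

section
variable {h g : ℝ → ℝ} {a b t : ℝ}

theorem sqrt_mul_integral_eq_integral_laplaceRescaled (hab : a ≤ b) (ht : 0 < t) :
    √t * ∫ x in a..b, exp (t * (h x - h a)) * g x =
      ∫ s in Ioi 0, laplaceRescaled h g a b t s := by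
  have hst : 0 < √t := sqrt_pos.2 ht
  rw [laplaceRescaled, setIntegral_indicator measurableSet_Iic, Ioi_inter_Iic,
    ← intervalIntegral.integral_of_le (by positivity),
    intervalIntegral.integral_comp_div (fun u => exp (t * (h (a + u) - h a)) * g (a + u)) hst.ne',
    intervalIntegral.integral_comp_add_left (fun x => exp (t * (h x - h a)) * g x) a]
  simp [hst.ne']

theorem mem_Icc_add_div_sqrt {s : ℝ} (ht : 0 < t) (hs : 0 ≤ s) (hsb : s ≤ √t * (b - a)) :
    a + s / √t ∈ Icc a b := by
  have hst : 0 < √t := sqrt_pos.2 ht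
  refine ⟨by simp; positivity, ?_⟩
  rw [← le_sub_iff_add_le', div_le_iff₀' hst]
  exact hsb

theorem aestronglyMeasurable_laplaceRescaled (ht : 0 < t)
    (hh : ContinuousOn h (Icc a b)) (hg : ContinuousOn g (Icc a b)) :
    AEStronglyMeasurable (laplaceRescaled h g a b t) (volume.restrict (Ioi 0)) := by
  have hmaps : MapsTo (fun s => a + s / √t) (Iic (√t * (b - a)) ∩ Ioi 0) (Icc a b) :=
    fun s ⟨hsT, hs0⟩ => mem_Icc_add_div_sqrt ht (le_of_lt hs0) hsT
  have hcont : ContinuousOn (fun s => a + s / √t) (Iic (√t * (b - a)) ∩ Ioi 0) := by fun_prop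
  rw [laplaceRescaled, aestronglyMeasurable_indicator_iff measurableSet_Iic,
    Measure.restrict_restrict measurableSet_Iic]
  refine ContinuousOn.aestronglyMeasurable ?_ (measurableSet_Iic.inter measurableSet_Ioi)
  exact (continuous_exp.comp_continuousOn (continuousOn_const.mul
    ((hh.comp hcont hmaps).sub continuousOn_const))).mul (hg.comp hcont hmaps)

theorem norm_laplaceRescaled_le {c M : ℝ} (hab : a ≤ b) (ht : 0 < t)
    (hquad : ∀ x ∈ Icc a b, h x - h a ≤ -c * (x - a) ^ 2) (hM : ∀ x ∈ Icc a b, ‖g x‖ ≤ M)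
    {s : ℝ} (hs : 0 ≤ s) :
    ‖laplaceRescaled h g a b t s‖ ≤ M * exp (-c * s ^ 2) := by
  rw [laplaceRescaled, indicator_apply]
  split_ifs with hsT
  · have hx := mem_Icc_add_div_sqrt ht hs hsT
    have hexp : t * (h (a + s / √t) - h a) ≤ -c * s ^ 2 :=
      calc t * (h (a + s / √t) - h a) ≤ t * (-c * (a + s / √t - a) ^ 2) := by
            gcongr; exact hquad _ hx
        _ = -c * s ^ 2 := by
            rw [add_sub_cancel_left, div_pow, sq_sqrt ht.le]; field_simp
    rw [norm_mul, norm_of_nonneg (exp_nonneg _), mul_comm]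
    exact mul_le_mul (hM _ hx) (exp_le_exp.2 hexp) (exp_nonneg _) ((norm_nonneg _).trans (hM _ hx))
  · have hM0 : 0 ≤ M := (norm_nonneg _).trans (hM a ⟨le_rfl, hab⟩)
    rw [norm_zero]
    positivity

theorem tendsto_add_div_sqrt_nhdsGT {s : ℝ} (hs : 0 < s) :
    Tendsto (fun t => a + s / √t) atTop (𝓝[>] a) := by
  refine tendsto_nhdsWithin_iff.2 ⟨?_, ?_⟩
  · simpa using (tendsto_const_nhds.div_atTop tendsto_sqrt_atTop).const_add a
  · filter_upwards [eventually_gt_atTop 0] with t ht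
    simp only [mem_Ioi, lt_add_iff_pos_right]
    exact div_pos hs (sqrt_pos.2 ht)

theorem tendsto_laplaceRescaled {q : ℝ} (hab : a < b) (hg : ContinuousOn g (Icc a b))
    (hquad : Tendsto (fun x => (h x - h a) / (x - a) ^ 2) (𝓝[>] a) (𝓝 q)) {s : ℝ} (hs : 0 < s) :
    Tendsto (fun t => laplaceRescaled h g a b t s) atTop (𝓝 (exp (q * s ^ 2) * g a)) := by
  have hu := tendsto_add_div_sqrt_nhdsGT (a := a) hs
  have hga : Tendsto g (𝓝[>] a) (𝓝 (g a)) := by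
    rw [← nhdsWithin_Ioo_eq_nhdsGT hab]
    exact ((hg a ⟨le_rfl, hab.le⟩).mono Ioo_subset_Icc_self).tendsto
  have hlim := ((continuous_exp.tendsto _).comp ((hquad.comp hu).const_mul (s ^ 2))).mul
    (hga.comp hu)
  rw [mul_comm (s ^ 2)] at hlim
  refine hlim.congr' ?_
  filter_upwards [eventually_gt_atTop 0,
    (tendsto_sqrt_atTop.atTop_mul_const (sub_pos.2 hab)).eventually_ge_atTop s] with t ht hsT
  have hst : √t ≠ 0 := (sqrt_pos.2 ht).ne'
  rw [laplaceRescaled, indicator_of_mem (mem_Iic.2 hsT)]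
  simp only [Function.comp_apply, add_sub_cancel_left, div_pow, sq_sqrt ht.le]
  field_simp

theorem tendsto_sqrt_mul_integral_exp_mul_sub_left {q : ℝ} (hab : a < b) (hq : q < 0)
    (hh : ContinuousOn h (Icc a b)) (hg : ContinuousOn g (Icc a b))
    (hmax : ∀ x ∈ Icc a b, x ≠ a → h x < h a)
    (hquad : Tendsto (fun x => (h x - h a) / (x - a) ^ 2) (𝓝[>] a) (𝓝 q)) :
    Tendsto (fun t => √t * ∫ x in a..b, exp (t * (h x - h a)) * g x) atTop
      (𝓝 (√(π / -q) / 2 * g a)) := by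
  have hloc : ∀ᶠ x in 𝓝[>] a, h x - h a ≤ -(-q / 2) * (x - a) ^ 2 := by
    filter_upwards [hquad.eventually (gt_mem_nhds (by linarith : q < q / 2)),
      self_mem_nhdsWithin] with x hx hax
    rw [div_lt_iff₀ (pow_pos (sub_pos.2 hax) 2)] at hx
    linarith
  obtain ⟨c, hc, hbound⟩ := exists_pos_forall_sub_le_neg_mul_sq hab (by linarith) hh hmax hloc
  obtain ⟨M, hM⟩ := isCompact_Icc.exists_bound_of_continuousOn hg
  have hgauss : ∫ s in Ioi 0, exp (q * s ^ 2) * g a = √(π / -q) / 2 * g a := by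
    rw [integral_mul_const, ← integral_gaussian_Ioi, neg_neg]
  rw [← hgauss]
  refine (tendsto_integral_filter_of_dominated_convergence (F := laplaceRescaled h g a b)
    (fun s => M * exp (-c * s ^ 2)) ?_ ?_ ?_ ?_).congr' ?_
  · filter_upwards [eventually_gt_atTop 0] with t ht
    exact aestronglyMeasurable_laplaceRescaled ht hh hg
  · filter_upwards [eventually_gt_atTop 0] with t ht
    exact ae_restrict_of_forall_mem measurableSet_Ioi fun s hs =>
      norm_laplaceRescaled_le hab.le ht hbound hM (le_of_lt hs)
  · exact ((integrable_exp_neg_mul_sq hc).const_mul M).integrableOn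
  · exact ae_restrict_of_forall_mem measurableSet_Ioi fun s hs =>
      tendsto_laplaceRescaled hab hg hquad hs
  · filter_upwards [eventually_gt_atTop 0] with t ht
    exact (sqrt_mul_integral_eq_integral_laplaceRescaled hab.le ht).symm

theorem tendsto_sqrt_mul_integral_exp_mul_sub_right {q : ℝ} (hab : a < b) (hq : q < 0)
    (hh : ContinuousOn h (Icc a b)) (hg : ContinuousOn g (Icc a b))
    (hmax : ∀ x ∈ Icc a b, x ≠ b → h x < h b)
    (hquad : Tendsto (fun x => (h x - h b) / (x - b) ^ 2) (𝓝[<] b) (𝓝 q)) :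
    Tendsto (fun t => √t * ∫ x in a..b, exp (t * (h x - h b)) * g x) atTop
      (𝓝 (√(π / -q) / 2 * g b)) := by
  have hneg : MapsTo Neg.neg (Icc (-b) (-a)) (Icc a b) := fun x ⟨h₁, h₂⟩ =>
    ⟨le_neg_of_le_neg h₂, neg_le.1 h₁⟩
  have hquad' : Tendsto (fun x => (h (-x) - h (-(-b))) / (x - -b) ^ 2) (𝓝[>] (-b)) (𝓝 q) := by
    refine (hquad.comp tendsto_neg_nhdsGT_neg).congr fun x => ?_
    simp only [Function.comp_apply, neg_neg]
    ring
  have hleft := tendsto_sqrt_mul_integral_exp_mul_sub_left (h := fun x => h (-x))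
    (g := fun x => g (-x)) (neg_lt_neg hab) hq
    (hh.comp continuousOn_neg hneg) (hg.comp continuousOn_neg hneg)
    (fun x hx hxb => by simpa using hmax (-x) (hneg hx) (by simpa [neg_eq_iff_eq_neg] using hxb))
    hquad'
  simp only [neg_neg] at hleft
  refine hleft.congr fun t => ?_
  simpa using congrArg (√t * ·)
    (intervalIntegral.integral_comp_neg (a := -b) (b := -a) fun x => exp (t * (h x - h b)) * g x)
end

theorem nonpos_of_tendsto_sub_div_sq {h : ℝ → ℝ} {l : Filter ℝ} [l.NeBot] {c q : ℝ}
    (hquad : Tendsto (fun x => (h x - h c) / (x - c) ^ 2) l (𝓝 q))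
    (hmax : ∀ᶠ x in l, h x ≤ h c) : q ≤ 0 :=
  le_of_tendsto hquad <| hmax.mono fun _ hx =>
    div_nonpos_of_nonpos_of_nonneg (sub_nonpos.2 hx) (sq_nonneg _)

theorem sqrt_pi_div_neg_half {H : ℝ} (hH : H < 0) :
    √(π / -(H / 2)) / 2 = √(π / (2 * |H|)) := by
  rw [abs_of_neg hH, div_eq_iff two_ne_zero, ← sqrt_sq zero_le_two, ← sqrt_mul' _ (by norm_num)]
  congr 1
  field_simp
  ring

theorem tendsto_sqrt_mul_integral_exp_mul_sub_of_endpoint {a b c : ℝ} {h g : ℝ → ℝ}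
    (hab : a < b) (hc : c = a ∨ c = b)
    (hh : ContDiffOn ℝ 2 h (Icc a b)) (hg : ContinuousOn g (Icc a b))
    (hmax : ∀ x ∈ Icc a b, x ≠ c → h x < h c)
    (hh1 : derivWithin h (Icc a b) c = 0) (hh2 : iteratedDerivWithin 2 h (Icc a b) c ≠ 0) :
    Tendsto (fun t => √t * ∫ x in a..b, exp (t * (h x - h c)) * g x) atTop
      (𝓝 (√(π / (2 * |iteratedDerivWithin 2 h (Icc a b) c|)) * g c)) := by
  set H := iteratedDerivWithin 2 h (Icc a b) c
  have hc_mem : c ∈ Icc a b := by rcases hc with rfl | rfl <;> simp [hab.le]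
  have htaylor := tendsto_sub_div_sq_of_derivWithin_eq_zero (convex_Icc a b) hc_mem hh hh1
  have hH2 : H / 2 ≠ 0 := by simpa using hh2
  rcases hc with rfl | rfl
  · have hquad : Tendsto (fun x => (h x - h c) / (x - c) ^ 2) (𝓝[>] c) (𝓝 (H / 2)) :=
      htaylor.mono_left <| (nhdsWithin_Ioo_eq_nhdsGT hab).symm.le.trans <|
        nhdsWithin_mono _ fun x hx => ⟨Ioo_subset_Icc_self hx, hx.1.ne'⟩
    have hneg := (nonpos_of_tendsto_sub_div_sq hquad (eventually_of_mem (Ioo_mem_nhdsGT hab)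
      fun x hx => (hmax x (Ioo_subset_Icc_self hx) hx.1.ne').le)).lt_of_ne hH2
    rw [← sqrt_pi_div_neg_half (by linarith)]
    exact tendsto_sqrt_mul_integral_exp_mul_sub_left hab hneg hh.continuousOn hg hmax hquad
  · have hquad : Tendsto (fun x => (h x - h c) / (x - c) ^ 2) (𝓝[<] c) (𝓝 (H / 2)) :=
      htaylor.mono_left <| (nhdsWithin_Ioo_eq_nhdsLT hab).symm.le.trans <|
        nhdsWithin_mono _ fun x hx => ⟨Ioo_subset_Icc_self hx, hx.2.ne⟩
    have hneg := (nonpos_of_tendsto_sub_div_sq hquad (eventually_of_mem (Ioo_mem_nhdsLT hab)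
      fun x hx => (hmax x (Ioo_subset_Icc_self hx) hx.2.ne).le)).lt_of_ne hH2
    rw [← sqrt_pi_div_neg_half (by linarith)]
    exact tendsto_sqrt_mul_integral_exp_mul_sub_right hab hneg hh.continuousOn hg hmax hquad

/-- Classical Laplace's method, endpoint maximum with `h'(c) = 0`:
`∫ e^{th} g ∼ √(π/(2|h''(c)|)) g(c) e^{th(c)} / √t` as `t → ∞`. -/
theorem laplace_endpoint_critical_classical
    (a b c : ℝ) (hab : a < b) (hc : c = a ∨ c = b)
    (h g : ℝ → ℝ)
    (hh : ContDiffOn ℝ 3 h (Set.Icc a b))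
    (hmax : ∀ x ∈ Set.Icc a b, x ≠ c → h x < h c)
    (hh1 : derivWithin h (Set.Icc a b) c = 0)
    (hh2 : iteratedDerivWithin 2 h (Set.Icc a b) c ≠ 0)
    (hg : ContDiffOn ℝ 1 g (Set.Icc a b))
    (hgc : g c ≠ 0) :
    Filter.Tendsto
      (fun t : ℝ => (∫ x in a..b, Real.exp (t * h x) * g x) /
        (Real.sqrt (π / (2 * |iteratedDerivWithin 2 h (Set.Icc a b) c|)) * g c *
          (Real.exp (t * h c) / Real.sqrt t)))
      Filter.atTop (nhds 1) := by
  set K := √(π / (2 * |iteratedDerivWithin 2 h (Icc a b) c|)) * g c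
  have hK : K ≠ 0 := mul_ne_zero (sqrt_pos.2 (by positivity)).ne' hgc
  have hlim := (tendsto_sqrt_mul_integral_exp_mul_sub_of_endpoint (g := g) hab hc
    (hh.of_le (by norm_num)) hg.continuousOn hmax hh1 hh2).div_const K
  rw [div_self hK] at hlim
  refine hlim.congr' ?_
  filter_upwards [eventually_gt_atTop 0] with t ht
  have hfactor : ∫ x in a..b, exp (t * h x) * g x =
      exp (t * h c) * ∫ x in a..b, exp (t * (h x - h c)) * g x := by
    rw [← intervalIntegral.integral_const_mul]
    congr 1 with x
    rw [mul_sub, exp_sub]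
    field_simp
  rw [hfactor]
  have hst : √t ≠ 0 := (sqrt_pos.2 ht).ne'
  field_simp
end
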